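/- ∑_{n=0}^∞ (1/(4n+1)) · ((1/2)_n / n!) = π^(3/2) / (2√2 · Γ(3/4)²), where (1/2)_n is the Pochhammer symbol. -/

import Mathlib

open scoped Real

noncomputable def poch (x : ℝ) (n : ℕ) : ℝ := ∏ k ∈ Finset.range n, (x + k)

/-!
Expanding `(1 - x)^(-1/2) = ∑ (1/2)ₙ/n! xⁿ` by the binomial series, multiplying by `x^(-3/4)` and
integrating term by term over `(0, 1)` (legitimate since all terms are nonnegative) turns the
series into the Beta integral `B(1/4, 1/2) = Γ(1/4) Γ(1/2) / Γ(3/4)`. The reflection formula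
`Γ(1/4) Γ(3/4) = π / sin(π/4) = √2 π` and `Γ(1/2) = √π` then give the closed form.
-/

open scoped Nat
open MeasureTheory Set

lemma poch_eq_ascPochhammer_eval (x : ℝ) (n : ℕ) : poch x n = (ascPochhammer ℝ n).eval x := by
  induction n with
  | zero => simp [poch]
  | succ n ih => rw [poch, Finset.prod_range_succ, ← poch, ih, ascPochhammer_succ_eval]

lemma poch_nonneg {x : ℝ} (hx : 0 ≤ x) (n : ℕ) : 0 ≤ poch x n :=
  Finset.prod_nonneg fun k _ => by positivity

lemma poch_div_factorial_eq_choose (a : ℝ) (n : ℕ) :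
    poch a n / n ! = Ring.choose (a + n - 1) n := by
  rw [← Ring.multichoose_eq, poch_eq_ascPochhammer_eval, ← Polynomial.ascPochhammer_smeval_eq_eval,
    ← Ring.factorial_nsmul_multichoose_eq_ascPochhammer, nsmul_eq_mul,
    mul_div_cancel_left₀ _ (by positivity)]

theorem hasSum_poch_div_factorial_mul_pow (a : ℝ) {x : ℝ} (hx : |x| < 1) :
    HasSum (fun n => poch a n / n ! * x ^ n) (1 / (1 - x) ^ a) := by
  have h := (Real.one_div_one_sub_rpow_hasFPowerSeriesOnBall_zero a).hasSum (y := x)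
    (by simpa [enorm_eq_nnnorm, ← NNReal.coe_lt_one] using hx)
  simpa [FormalMultilinearSeries.ofScalars_apply_eq, poch_div_factorial_eq_choose, mul_comm] using h

lemma ofReal_rpow_mul_one_sub_rpow {x : ℝ} (hx : x ∈ Icc (0 : ℝ) 1) (u v : ℝ) :
    ((x ^ (u - 1) * (1 - x) ^ (v - 1) : ℝ) : ℂ) =
      (x : ℂ) ^ ((u : ℂ) - 1) * (1 - (x : ℂ)) ^ ((v : ℂ) - 1) := by
  rw [Complex.ofReal_mul, Complex.ofReal_cpow hx.1, Complex.ofReal_cpow (sub_nonneg.2 hx.2)]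
  push_cast
  rfl

theorem intervalIntegrable_rpow_mul_one_sub_rpow {u v : ℝ} (hu : 0 < u) (hv : 0 < v) :
    IntervalIntegrable (fun x : ℝ => x ^ (u - 1) * (1 - x) ^ (v - 1)) volume 0 1 := by
  have h := (Complex.betaIntegral_convergent (u := u) (v := v) (by simpa) (by simpa)).congr
    (g := fun x : ℝ => ((x ^ (u - 1) * (1 - x) ^ (v - 1) : ℝ) : ℂ))
    (fun x hx => (ofReal_rpow_mul_one_sub_rpow (Ioc_subset_Icc_self (by simpa using hx)) u v).symm)
  rw [intervalIntegrable_iff_integrableOn_Ioc_of_le zero_le_one]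
  have h_re := h.1.re
  simp only [RCLike.re_to_complex, Complex.ofReal_re] at h_re
  exact h_re

theorem integral_rpow_mul_one_sub_rpow {u v : ℝ} (hu : 0 < u) (hv : 0 < v) :
    ∫ x in (0 : ℝ)..1, x ^ (u - 1) * (1 - x) ^ (v - 1) =
      Real.Gamma u * Real.Gamma v / Real.Gamma (u + v) := by
  have h := Complex.betaIntegral_eq_Gamma_mul_div u v (by simpa) (by simpa)
  rw [Complex.betaIntegral, ← intervalIntegral.integral_congr
    (fun x hx => ofReal_rpow_mul_one_sub_rpow (by simpa using hx) u v),
    intervalIntegral.integral_ofReal, ← Complex.ofReal_add,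
    Complex.Gamma_ofReal, Complex.Gamma_ofReal, Complex.Gamma_ofReal] at h
  exact_mod_cast h

/-- Dominated convergence, with the sum of the nonnegative series as its own dominating function. -/
theorem hasSum_integral_of_nonneg {α ι : Type*} [MeasurableSpace α] [Countable ι] {μ : Measure α}
    {F : ι → α → ℝ} {f : α → ℝ} (hF_meas : ∀ n, AEStronglyMeasurable (F n) μ)
    (hF_nonneg : ∀ n, 0 ≤ᵐ[μ] F n) (hf : Integrable f μ)
    (h_lim : ∀ᵐ x ∂μ, HasSum (fun n => F n x) (f x)) :
    HasSum (fun n => ∫ x, F n x ∂μ) (∫ x, f x ∂μ) := by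
  refine hasSum_integral_of_dominated_convergence F hF_meas (fun n => ?_)
    (h_lim.mono fun x hx => hx.summable) (hf.congr ?_) h_lim
  · filter_upwards [hF_nonneg n] with x hx using (Real.norm_of_nonneg hx).le
  · filter_upwards [h_lim] with x hx using hx.tsum_eq.symm

theorem hasSum_poch_div_factorial_div_add {a b : ℝ} (ha₀ : 0 ≤ a) (ha₁ : a < 1) (hb : 0 < b) :
    HasSum (fun n : ℕ => poch a n / n ! / (n + b))
      (Real.Gamma b * Real.Gamma (1 - a) / Real.Gamma (b + (1 - a))) := by
  have h_integral (n : ℕ) :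
      ∫ x in Ioo (0 : ℝ) 1, poch a n / n ! * x ^ ((n : ℝ) + b - 1) = poch a n / n ! / (n + b) := by
    have hr : -1 < (n : ℝ) + b - 1 := by linarith [n.cast_nonneg (α := ℝ)]
    rw [integral_const_mul, ← integral_Ioc_eq_integral_Ioo,
      ← intervalIntegral.integral_of_le zero_le_one, integral_rpow (.inl hr),
      Real.one_rpow, Real.zero_rpow (by linarith)]
    ring_nf
  have h_lim : ∀ᵐ x ∂volume.restrict (Ioo (0 : ℝ) 1), HasSum
      (fun n : ℕ => poch a n / n ! * x ^ ((n : ℝ) + b - 1))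
      (x ^ (b - 1) * (1 - x) ^ (1 - a - 1)) := by
    filter_upwards [ae_restrict_mem measurableSet_Ioo] with x hx
    have h := (hasSum_poch_div_factorial_mul_pow a (x := x)
      (abs_lt.2 ⟨by linarith [hx.1], hx.2⟩)).mul_right (x ^ (b - 1))
    rw [show x ^ (b - 1) * (1 - x) ^ (1 - a - 1) = 1 / (1 - x) ^ a * x ^ (b - 1) by
      rw [sub_sub_cancel_left, Real.rpow_neg (sub_pos.2 hx.2).le]; ring]
    simpa only [add_sub_assoc, Real.rpow_add hx.1, Real.rpow_natCast, mul_assoc] using h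
  have h_nonneg (n : ℕ) : 0 ≤ᵐ[volume.restrict (Ioo (0 : ℝ) 1)]
      fun x => poch a n / n ! * x ^ ((n : ℝ) + b - 1) := by
    filter_upwards [ae_restrict_mem measurableSet_Ioo] with x hx
    exact mul_nonneg (div_nonneg (poch_nonneg ha₀ n) (by positivity)) (Real.rpow_nonneg hx.1.le _)
  have hf := (intervalIntegrable_iff_integrableOn_Ioo_of_le zero_le_one).1
    (intervalIntegrable_rpow_mul_one_sub_rpow hb (sub_pos.2 ha₁))
  have h := hasSum_integral_of_nonneg (fun n => by fun_prop) h_nonneg hf h_lim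
  rwa [funext h_integral, ← integral_Ioc_eq_integral_Ioo,
    ← intervalIntegral.integral_of_le zero_le_one,
    integral_rpow_mul_one_sub_rpow hb (sub_pos.2 ha₁)] at h

lemma Gamma_one_quarter_mul_Gamma_three_quarters :
    Real.Gamma (1 / 4) * Real.Gamma (3 / 4) = √2 * π := by
  have h := Real.Gamma_mul_Gamma_one_sub (1 / 4)
  rw [show (1 : ℝ) - 1 / 4 = 3 / 4 by norm_num, show π * (1 / 4) = π / 4 by ring,
    Real.sin_pi_div_four] at h
  rw [h]
  field_simp
  rw [Real.sq_sqrt zero_le_two]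

theorem ramanujan_sum_three :
    HasSum (fun n : ℕ => (1 / (4 * (n : ℝ) + 1)) * (poch (1/2) n / (n.factorial : ℝ)))
      (π ^ ((3 : ℝ) / 2) / (2 * Real.sqrt 2 * Real.Gamma (3/4) ^ 2)) := by
  have h := (hasSum_poch_div_factorial_div_add (a := 1 / 2) (b := 1 / 4)
    (by norm_num) (by norm_num) (by norm_num)).mul_left (1 / 4)
  have h_term (n : ℕ) : 1 / 4 * (poch (1 / 2) n / n ! / (n + 1 / 4)) =
      1 / (4 * (n : ℝ) + 1) * (poch (1 / 2) n / n !) := by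
    field_simp
  have h_value : 1 / 4 * (Real.Gamma (1 / 4) * Real.Gamma (1 - 1 / 2) /
      Real.Gamma (1 / 4 + (1 - 1 / 2))) =
      π ^ ((3 : ℝ) / 2) / (2 * √2 * Real.Gamma (3 / 4) ^ 2) := by
    have hπ : π ^ ((3 : ℝ) / 2) = π * √π := by
      rw [show (3 : ℝ) / 2 = 1 + 1 / 2 by norm_num, Real.rpow_add Real.pi_pos, Real.rpow_one,
        Real.sqrt_eq_rpow]
    rw [show (1 : ℝ) - 1 / 2 = 1 / 2 by norm_num, show (1 : ℝ) / 4 + 1 / 2 = 3 / 4 by norm_num,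
      Real.Gamma_one_half_eq, hπ]
    field_simp
    rw [Gamma_one_quarter_mul_Gamma_three_quarters]
    linear_combination (2 * π) * Real.mul_self_sqrt zero_le_two
  simpa only [h_term, h_value] using h
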